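/- In B₆, let ψ₁ = σ₄σ₅⁻¹σ₂⁻¹σ₁ and ψ₂ = σ₄⁻¹σ₅²σ₂σ₁⁻², and set a = ψ₁⁻¹σ₃ψ₁, b = ψ₂⁻¹σ₃ψ₂, and δ = a⁻¹b⁻¹ab. Then δ is not the identity element of B₆ (equivalently, a and b do not commute in B₆). -/

import Mathlib

open LaurentPolynomial

/-- The ring `Λ = ℤ[t,t⁻¹]` of Laurent polynomials over `ℤ`. -/
abbrev Λ : Type := LaurentPolynomial ℤ

/-- The braid relations on `m` generators `σ_1, …, σ_m` (indexed here by `Fin m`,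
with index `i : Fin m` corresponding to the Artin generator `σ_{i+1}`). -/
def braidRels (m : ℕ) : Set (FreeGroup (Fin m)) :=
  { r | (∃ i j : Fin m, (i : ℕ) + 2 ≤ (j : ℕ) ∧
          r = FreeGroup.of i * FreeGroup.of j * (FreeGroup.of i)⁻¹ * (FreeGroup.of j)⁻¹) ∨
        (∃ i j : Fin m, (i : ℕ) + 1 = (j : ℕ) ∧
          r = FreeGroup.of i * FreeGroup.of j * FreeGroup.of i *
              (FreeGroup.of j * FreeGroup.of i * FreeGroup.of j)⁻¹) }

/-- The braid group `B_n`, presented on `n - 1` generators with the braid relations. -/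
abbrev BraidGroup (n : ℕ) : Type := PresentedGroup (braidRels (n - 1))

/-- The Artin generator: `σ i` corresponds to the classical `σ_{i+1}` (0-indexed). -/
def σ {n : ℕ} (i : Fin (n - 1)) : BraidGroup n := PresentedGroup.of i

/-- The `i`-th reduced Burau matrix (0-indexed: `burauMatrix m i` is the matrix `B_{i+1}`
of the classical generator `σ_{i+1}`): it agrees with the identity except in row `i`,
where the entries are `t` in column `i-1`, `-t` in column `i`, `1` in column `i+1`. -/
noncomputable def burauMatrix (m : ℕ) (i : Fin m) : Matrix (Fin m) (Fin m) Λ :=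
  fun r c =>
    if r = i then
      if (c : ℕ) + 1 = (i : ℕ) then T 1
      else if c = i then - T 1
      else if (c : ℕ) = (i : ℕ) + 1 then 1
      else 0
    else if r = c then 1 else 0

/-- The classical Artin generators `σ₁, …, σ₅` of `B₆`. -/
def s₁ : BraidGroup 6 := σ ⟨0, by norm_num⟩
def s₂ : BraidGroup 6 := σ ⟨1, by norm_num⟩
def s₃ : BraidGroup 6 := σ ⟨2, by norm_num⟩
def s₄ : BraidGroup 6 := σ ⟨3, by norm_num⟩
def s₅ : BraidGroup 6 := σ ⟨4, by norm_num⟩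

/-- `ψ₁ = σ₄ σ₅⁻¹ σ₂⁻¹ σ₁`. -/
def ψ₁ : BraidGroup 6 := s₄ * s₅⁻¹ * s₂⁻¹ * s₁

/-- `ψ₂ = σ₄⁻¹ σ₅² σ₂ σ₁⁻²`. -/
def ψ₂ : BraidGroup 6 := s₄⁻¹ * s₅ ^ 2 * s₂ * (s₁ ^ 2)⁻¹

/-- `a = ψ₁⁻¹ σ₃ ψ₁`. -/
def a : BraidGroup 6 := ψ₁⁻¹ * s₃ * ψ₁

/-- `b = ψ₂⁻¹ σ₃ ψ₂`. -/
def b : BraidGroup 6 := ψ₂⁻¹ * s₃ * ψ₂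

/-- `δ = [a, b] = a⁻¹ b⁻¹ a b`. -/
def δ : BraidGroup 6 := a⁻¹ * b⁻¹ * a * b

/-!
`δ` lies in the kernel of the Burau representation, so a non-linear invariant is needed. We use
the Hurwitz action of `B_{m+1}` on `(m+1)`-tuples in a group `G`, where `σ_i` replaces the
adjacent pair `(x, y)` in positions `i, i+1` by `(x y x⁻¹, x)`. For `G = S₃` there is a tuple
`v₀` fixed by `a` such that `b • v₀` is not fixed by `a`, so `a` and `b` do not commute.
-/

section HurwitzAction

variable {G : Type*} [Group G] {m : ℕ}

def hurwitzMove (i : Fin m) (v : Fin (m + 1) → G) : Fin (m + 1) → G := fun j =>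
  if j = i.castSucc then v i.castSucc * v i.succ * (v i.castSucc)⁻¹
  else if j = i.succ then v i.castSucc
  else v j

def hurwitzMoveInv (i : Fin m) (v : Fin (m + 1) → G) : Fin (m + 1) → G := fun j =>
  if j = i.castSucc then v i.succ
  else if j = i.succ then (v i.succ)⁻¹ * v i.castSucc * v i.succ
  else v j

def hurwitzPerm (i : Fin m) : Equiv.Perm (Fin (m + 1) → G) where
  toFun := hurwitzMove i
  invFun := hurwitzMoveInv i
  left_inv v := by
    funext j
    have hi := (Fin.castSucc_lt_succ (i := i)).ne
    simp only [hurwitzMove, hurwitzMoveInv]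
    split_ifs <;> simp_all [mul_assoc]
  right_inv v := by
    funext j
    have hi := (Fin.castSucc_lt_succ (i := i)).ne
    simp only [hurwitzMove, hurwitzMoveInv]
    split_ifs <;> simp_all [mul_assoc]

theorem hurwitzPerm_comm {i j : Fin m} (hij : (i : ℕ) + 2 ≤ j) :
    (hurwitzPerm i * hurwitzPerm j : Equiv.Perm (Fin (m + 1) → G)) =
      hurwitzPerm j * hurwitzPerm i := by
  have h₁ : i.castSucc ≠ j.castSucc := Fin.ne_of_val_ne (show (i : ℕ) ≠ j by omega)
  have h₂ : i.succ ≠ j.castSucc := Fin.ne_of_val_ne (show (i : ℕ) + 1 ≠ j by omega)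
  have h₃ : i.castSucc ≠ j.succ := Fin.ne_of_val_ne (show (i : ℕ) ≠ j + 1 by omega)
  have h₄ : i.succ ≠ j.succ := Fin.ne_of_val_ne (show (i : ℕ) + 1 ≠ j + 1 by omega)
  have hi := (Fin.castSucc_lt_succ (i := i)).ne
  have hj := (Fin.castSucc_lt_succ (i := j)).ne
  ext v k : 2
  change hurwitzMove i (hurwitzMove j v) k = hurwitzMove j (hurwitzMove i v) k
  simp only [hurwitzMove]
  split_ifs <;> simp_all

theorem hurwitzPerm_braid {i j : Fin m} (hij : (i : ℕ) + 1 = j) :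
    (hurwitzPerm i * hurwitzPerm j * hurwitzPerm i : Equiv.Perm (Fin (m + 1) → G)) =
      hurwitzPerm j * hurwitzPerm i * hurwitzPerm j := by
  have hji : j.castSucc = i.succ := Fin.ext (show (j : ℕ) = i + 1 by omega)
  have h₁ : i.succ ≠ j.succ := Fin.ne_of_val_ne (show (i : ℕ) + 1 ≠ j + 1 by omega)
  have h₂ : i.castSucc ≠ j.succ := Fin.ne_of_val_ne (show (i : ℕ) ≠ j + 1 by omega)
  have hi := (Fin.castSucc_lt_succ (i := i)).ne
  ext v k : 2
  change hurwitzMove i (hurwitzMove j (hurwitzMove i v)) k =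
    hurwitzMove j (hurwitzMove i (hurwitzMove j v)) k
  simp only [hurwitzMove, hji]
  split_ifs <;> simp_all [mul_assoc]

theorem lift_hurwitzPerm_of_mem_braidRels :
    ∀ r ∈ braidRels m, FreeGroup.lift (hurwitzPerm (G := G)) r = 1 := by
  rintro r (⟨i, j, hij, rfl⟩ | ⟨i, j, hij, rfl⟩) <;>
    simp only [map_mul, map_inv, FreeGroup.lift_apply_of]
  · rw [mul_inv_eq_one, mul_inv_eq_iff_eq_mul, hurwitzPerm_comm hij]
  · rw [mul_inv_eq_one, hurwitzPerm_braid hij]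

def hurwitzAction : PresentedGroup (braidRels m) →* Equiv.Perm (Fin (m + 1) → G) :=
  PresentedGroup.toGroup lift_hurwitzPerm_of_mem_braidRels

theorem hurwitzAction_σ {n : ℕ} (i : Fin (n - 1)) :
    hurwitzAction (σ i) = (hurwitzPerm i : Equiv.Perm (Fin (n - 1 + 1) → G)) :=
  PresentedGroup.toGroup.of _

end HurwitzAction

theorem not_commute_of_apply_eq_of_apply_ne {H α : Type*} [Group H] (φ : H →* Equiv.Perm α)
    {x y : H} {v : α} (hx : φ x v = v) (hxy : φ x (φ y v) ≠ φ y v) : ¬Commute x y := by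
  intro h
  apply hxy
  rw [← Equiv.Perm.mul_apply, ← map_mul, h.eq, map_mul, Equiv.Perm.mul_apply, hx]

open scoped commutatorElement

def v₀ : Fin 6 → Equiv.Perm (Fin 3) :=
  ![Equiv.swap 1 2, 1, 1, 1, Equiv.swap 0 1, Equiv.swap 1 2]

def w₀ : Fin 6 → Equiv.Perm (Fin 3) :=
  ![Equiv.swap 1 2, Equiv.swap 1 2, 1, 1, 1, Equiv.swap 0 2]

theorem hurwitzAction_a_v₀ : hurwitzAction a v₀ = v₀ := by
  simp only [a, ψ₁, s₁, s₂, s₃, s₄, s₅, map_mul, map_inv, hurwitzAction_σ]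
  decide

set_option maxRecDepth 10000 in
theorem hurwitzAction_b_v₀ : hurwitzAction b v₀ = w₀ := by
  simp only [b, ψ₂, s₁, s₂, s₃, s₄, s₅, map_mul, map_inv, map_pow, hurwitzAction_σ]
  decide

theorem hurwitzAction_a_w₀ : hurwitzAction a w₀ ≠ w₀ := by
  simp only [a, ψ₁, s₁, s₂, s₃, s₄, s₅, map_mul, map_inv, hurwitzAction_σ]
  decide

/-- The braid `δ ∈ B₆` is a nontrivial element: `a` and `b` do not commute in `B₆`. -/
theorem b6_braid_ne_one : δ ≠ 1 := by
  have hδ : δ = ⁅a⁻¹, b⁻¹⁆ := by rw [δ, commutatorElement_def, inv_inv, inv_inv]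
  rw [hδ, Ne, commutatorElement_eq_one_iff_commute, Commute.inv_inv_iff]
  refine not_commute_of_apply_eq_of_apply_ne hurwitzAction hurwitzAction_a_v₀ ?_
  rw [hurwitzAction_b_v₀]
  exact hurwitzAction_a_w₀
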